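/- arXiv:1408.2597 — 4 statements merged into one kernel-verified Lean document; each statement's English description precedes it below -/
import Mathlib

section
/- Let {A_k}_{k≥1} be a nonnegative real sequence with A_{k+1} ≤ (1 - a/k) A_k + b/k² for all k ≥ 1, where a > 1 and b > 0. Then A_k ≤ (2b/(a-1)) / k for all k ≥ ⌊a⌋ + 1. -/
/-!
With `C = 2b/(a-1)` the bound `A k ≤ C/k` propagates: for `k ≥ a` the coefficient `1 - a/k` is
nonnegative and `(1 - a/k) C/k + b/k² ≤ C/(k+1)`. At `k = ⌊a⌋` the coefficient is nonpositive, so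
`A (⌊a⌋+1) ≤ b/⌊a⌋²`, which already lies below `C/(⌊a⌋+1)`; this starts the induction.
-/

namespace RecursiveBound

variable {a b k : ℝ}

lemma one_sub_div_nonneg (hk : a ≤ k) (hk0 : 0 < k) : 0 ≤ 1 - a / k := by
  rw [sub_nonneg, div_le_one hk0]
  exact hk

lemma one_sub_div_nonpos (hk : k ≤ a) (hk0 : 0 < k) : 1 - a / k ≤ 0 := by
  rw [sub_nonpos, le_div_iff₀ hk0, one_mul]
  exact hk

lemma step_le_of_le_div (ha : 1 < a) (hb : 0 ≤ b) (hk : a ≤ k) {x : ℝ}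
    (hx : x ≤ 2 * b / (a - 1) / k) :
    (1 - a / k) * x + b / k ^ 2 ≤ 2 * b / (a - 1) / (k + 1) := by
  have hk0 : 0 < k := by linarith
  have ha1 : 0 < a - 1 := by linarith
  calc (1 - a / k) * x + b / k ^ 2
      ≤ (1 - a / k) * (2 * b / (a - 1) / k) + b / k ^ 2 := by
        gcongr
        exact one_sub_div_nonneg hk hk0
    _ ≤ 2 * b / (a - 1) / (k + 1) := by
        set C := 2 * b / (a - 1)
        have hC : C * (a - 1) = 2 * b := div_mul_cancel₀ _ ha1.ne'
        have hC0 : 0 ≤ C := by positivity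
        have hsum : (1 - a / k) * (C / k) + b / k ^ 2 = ((k - a) * C + b) / k ^ 2 := by
          field_simp
        rw [hsum, div_le_div_iff₀ (by positivity) (by positivity)]
        -- using `C (a-1) = 2b`, this reduces to `b (1 - k) ≤ C a`
        nlinarith [mul_nonneg hb (by linarith : (0 : ℝ) ≤ k - 1),
          mul_nonneg hC0 (by linarith : (0 : ℝ) ≤ a)]

lemma div_sq_le_of_lt_add_one (ha : 1 < a) (hb : 0 ≤ b) (hk : 1 ≤ k) (hak : a < k + 1) :
    b / k ^ 2 ≤ 2 * b / (a - 1) / (k + 1) := by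
  have ha1 : 0 < a - 1 := by linarith
  rw [div_div, div_le_div_iff₀ (by positivity) (by positivity)]
  have : (a - 1) * (k + 1) ≤ 2 * k ^ 2 := by nlinarith
  nlinarith

end RecursiveBound

open RecursiveBound in
theorem stmt_2 (A : ℕ → ℝ) (a b : ℝ) (ha : 1 < a) (hb : 0 < b)
    (hA : ∀ k : ℕ, 1 ≤ k → 0 ≤ A k)
    (hrec : ∀ k : ℕ, 1 ≤ k → A (k + 1) ≤ (1 - a / (k : ℝ)) * A k + b / (k : ℝ) ^ 2) :
    ∀ k : ℕ, Nat.floor a + 1 ≤ k → A k ≤ (2 * b / (a - 1)) / (k : ℝ) := by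
  have hf : 1 ≤ ⌊a⌋₊ := Nat.le_floor (by exact_mod_cast ha.le)
  have hf' : (1 : ℝ) ≤ ⌊a⌋₊ := by exact_mod_cast hf
  intro k hk
  induction k, hk using Nat.le_induction with
  | base =>
    push_cast
    calc A (⌊a⌋₊ + 1) ≤ (1 - a / ⌊a⌋₊) * A ⌊a⌋₊ + b / (⌊a⌋₊ : ℝ) ^ 2 := hrec _ hf
      _ ≤ b / (⌊a⌋₊ : ℝ) ^ 2 := by
        have := mul_nonpos_of_nonpos_of_nonneg
          (one_sub_div_nonpos (Nat.floor_le (by linarith : (0 : ℝ) ≤ a)) (by linarith)) (hA _ hf)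
        linarith
      _ ≤ 2 * b / (a - 1) / (⌊a⌋₊ + 1) :=
        div_sq_le_of_lt_add_one ha hb.le hf' (Nat.lt_floor_add_one a)
  | succ k hk ih =>
    have hak : a ≤ k := by
      have : (⌊a⌋₊ + 1 : ℝ) ≤ k := by exact_mod_cast hk
      linarith [Nat.lt_floor_add_one a]
    push_cast
    exact (hrec k (by omega)).trans (step_le_of_le_div ha hb.le hak ih)
end

section
/- Let {a_k} and {b_k} be nonnegative real sequences such that ∑_{k=1}^∞ a_k = +∞, ∑_{k=1}^∞ a_k b_k < +∞, and there exists B > 0 with |b_{k+1} − b_k| ≤ B a_k for all k. Then lim_{k→∞} b_k = 0. -/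
/-! Suppose `b m ≥ ε` for some large `m`. Since `b` drops by at most `B a_k` per step, it stays
above `ε / 2` until the `a`-mass collected after `m` reaches `ε / (2B)`, which happens because
`∑ a_k = ∞`. That block therefore carries `∑ a_k b_k ≥ ε² / (4B)`, while blocks of a summable
series starting late are arbitrarily small. -/

open Filter Finset

theorem Summable.eventually_forall_sum_Ico_lt {f : ℕ → ℝ} (hf : Summable f) {δ : ℝ}
    (hδ : 0 < δ) : ∀ᶠ m in atTop, ∀ n, ∑ k ∈ Ico m n, f k < δ := by
  obtain ⟨s, hs⟩ := hf.vanishing (Iio_mem_nhds hδ)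
  obtain ⟨N, hsN⟩ := exists_nat_subset_range s
  filter_upwards [eventually_ge_atTop N] with m hm n
  refine hs (Ico m n) (disjoint_left.2 fun k hk hks => ?_)
  have := mem_range.1 (hsN hks)
  have := (mem_Ico.1 hk).1
  omega

theorem sub_mul_sum_Ico_le {a b : ℕ → ℝ} {B : ℝ} (hdrop : ∀ k, b k - b (k + 1) ≤ B * a k)
    {m j : ℕ} (hmj : m ≤ j) : b m - B * ∑ k ∈ Ico m j, a k ≤ b j := by
  induction j, hmj using Nat.le_induction with
  | base => simp
  | succ j hmj ih =>
    rw [sum_Ico_succ_top hmj, mul_add]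
    linarith [hdrop j]

theorem exists_first_le_sum_Ico {a : ℕ → ℝ}
    (hdiv : Tendsto (fun n => ∑ k ∈ range n, a k) atTop atTop) (m : ℕ) (c : ℝ) :
    ∃ n, m ≤ n ∧ c ≤ ∑ k ∈ Ico m n, a k ∧ ∀ j ∈ Ico m n, ∑ k ∈ Ico m j, a k < c := by
  classical
  have hex : ∃ n, m ≤ n ∧ c ≤ ∑ k ∈ Ico m n, a k := by
    obtain ⟨n, hn, hmn⟩ :=
      ((hdiv.eventually_ge_atTop (c + ∑ k ∈ range m, a k)).and (eventually_ge_atTop m)).exists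
    exact ⟨n, hmn, by rw [sum_Ico_eq_sub _ hmn]; linarith⟩
  obtain ⟨hmn, hc⟩ := Nat.find_spec hex
  refine ⟨Nat.find hex, hmn, hc, fun j hj => ?_⟩
  obtain ⟨hmj, hjn⟩ := mem_Ico.1 hj
  exact lt_of_not_ge fun hcj => Nat.find_min hex hjn ⟨hmj, hcj⟩

theorem exists_sq_div_le_sum_Ico_mul {a b : ℕ → ℝ} {B : ℝ} (hB : 0 < B) (ha : ∀ k, 0 ≤ a k)
    (hdiv : Tendsto (fun n => ∑ k ∈ range n, a k) atTop atTop)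
    (hdrop : ∀ k, b k - b (k + 1) ≤ B * a k) {ε : ℝ} (hε : 0 ≤ ε) {m : ℕ} (hbm : ε ≤ b m) :
    ∃ n, ε ^ 2 / (4 * B) ≤ ∑ k ∈ Ico m n, a k * b k := by
  obtain ⟨n, -, hmass, hfirst⟩ := exists_first_le_sum_Ico hdiv m (ε / (2 * B))
  have hhalf : ∀ j ∈ Ico m n, ε / 2 ≤ b j := fun j hj => by
    have hlt : B * ∑ k ∈ Ico m j, a k < B * (ε / (2 * B)) :=
      mul_lt_mul_of_pos_left (hfirst j hj) hB
    have hBε : B * (ε / (2 * B)) = ε / 2 := by field_simp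
    linarith [sub_mul_sum_Ico_le hdrop (mem_Ico.1 hj).1]
  refine ⟨n, ?_⟩
  calc ε ^ 2 / (4 * B) = ε / 2 * (ε / (2 * B)) := by field_simp; ring
    _ ≤ ε / 2 * ∑ k ∈ Ico m n, a k := by gcongr
    _ = ∑ k ∈ Ico m n, a k * (ε / 2) := by rw [mul_sum]; simp_rw [mul_comm]
    _ ≤ ∑ k ∈ Ico m n, a k * b k :=
      sum_le_sum fun k hk => mul_le_mul_of_nonneg_left (hhalf k hk) (ha k)

theorem stmt_4 (a b : ℕ → ℝ) (B : ℝ) (hB : 0 < B)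
    (ha : ∀ k, 0 ≤ a k) (hb : ∀ k, 0 ≤ b k)
    (hdiv : Tendsto (fun n => ∑ k ∈ Finset.range n, a k) atTop atTop)
    (hsum : Summable (fun k => a k * b k))
    (hdiff : ∀ k, |b (k + 1) - b k| ≤ B * a k) :
    Tendsto b atTop (nhds 0) := by
  have hdrop : ∀ k, b k - b (k + 1) ≤ B * a k := fun k => by
    linarith [neg_abs_le (b (k + 1) - b k), hdiff k]
  refine tendsto_order.2 ⟨fun ε hε => Eventually.of_forall fun k => hε.trans_le (hb k),
    fun ε hε => ?_⟩
  filter_upwards [hsum.eventually_forall_sum_Ico_lt (by positivity : 0 < ε ^ 2 / (4 * B))]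
    with m hsmall
  by_contra! hbm
  obtain ⟨n, hn⟩ := exists_sq_div_le_sum_Ico_mul hB ha hdiv hdrop hε.le hbm
  exact (hsmall n).not_ge hn
end

section
/- Let η ∈ (0,1), ε > 0, and let {σ_k²} be a nonnegative sequence. Set e_k = max{σ_k², (η+ε)^k} and μ_k = ∑_{j=1}^k η^{k−j} σ_j². Suppose there exists K such that e_{k+1}/e_k ≥ η + ε/2 for all k ≥ K. Then there is a constant B > 0 with μ_k ≤ B e_k for all k; in particular μ_k = O(e_k). -/
/-!
Unrolling the definition gives the recursion `μ (k+1) = η μ k + σ²_{k+1} ≤ η μ k + e (k+1)`.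
Beyond `K` the envelope grows at least geometrically with ratio `ρ = η + ε/2 > η`, so for
`B ≥ ρ / (ρ - η)` the bound `μ k ≤ B e k` is inherited from `k` to `k + 1`; the finitely many
indices up to `K` are absorbed by enlarging `B`.
-/

open Finset

theorem sum_Icc_pow_sub_mul_succ {R : Type*} [CommSemiring R] (η : R) (f : ℕ → R) (k : ℕ) :
    ∑ j ∈ Icc 1 (k + 1), η ^ (k + 1 - j) * f j
      = η * ∑ j ∈ Icc 1 k, η ^ (k - j) * f j + f (k + 1) := by
  rw [sum_Icc_succ_top (by omega), Nat.sub_self, pow_zero, one_mul, mul_sum]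
  congr 1
  refine sum_congr rfl fun j hj => ?_
  rw [Nat.sub_add_comm (mem_Icc.mp hj).2, pow_succ]
  ring

section Domination

variable {η ρ B : ℝ} {μ e : ℕ → ℝ}

theorem le_mul_succ_of_le_mul (hη : 0 ≤ η) (hB : 1 ≤ B) (hρB : ρ ≤ (ρ - η) * B) {k : ℕ}
    (hek : 0 ≤ e k) (hgrow : ρ * e k ≤ e (k + 1)) (hrec : μ (k + 1) ≤ η * μ k + e (k + 1))
    (hk : μ k ≤ B * e k) : μ (k + 1) ≤ B * e (k + 1) := by
  have hηB : η * B * e k ≤ (B - 1) * e (k + 1) :=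
    calc η * B * e k ≤ (B - 1) * (ρ * e k) := by nlinarith
      _ ≤ (B - 1) * e (k + 1) := mul_le_mul_of_nonneg_left hgrow (by linarith)
  nlinarith [mul_le_mul_of_nonneg_left hk hη]

theorem exists_forall_le_mul_of_eventually_growth (hη : 0 ≤ η) (hρ : η < ρ)
    (he : ∀ k, 0 < e k) (hrec : ∀ k, μ (k + 1) ≤ η * μ k + e (k + 1)) {K : ℕ}
    (hgrow : ∀ k, K ≤ k → ρ * e k ≤ e (k + 1)) : ∃ B, 0 < B ∧ ∀ k, μ k ≤ B * e k := by
  obtain ⟨C, hC⟩ := ((Set.finite_Iic K).image fun k => μ k / e k).bddAbove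
  have hinit : ∀ k ≤ K, μ k ≤ C * e k := fun k hk =>
    (div_le_iff₀ (he k)).mp (hC (Set.mem_image_of_mem _ (Set.mem_Iic.mpr hk)))
  set B := max 1 (max (ρ / (ρ - η)) C)
  have hB : 1 ≤ B := le_max_left _ _
  have hρB : ρ ≤ (ρ - η) * B := by
    rw [← div_le_iff₀' (by linarith)]
    exact (le_max_left _ _).trans (le_max_right _ _)
  have hCB : C ≤ B := (le_max_right _ _).trans (le_max_right _ _)
  refine ⟨B, by linarith, fun k => ?_⟩
  rcases le_total k K with hk | hk
  · exact (hinit k hk).trans (mul_le_mul_of_nonneg_right hCB (he k).le)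
  induction k, hk using Nat.le_induction with
  | base => exact (hinit K le_rfl).trans (mul_le_mul_of_nonneg_right hCB (he K).le)
  | succ k hKk ih =>
    exact le_mul_succ_of_le_mul hη hB hρB (he k).le (hgrow k hKk) (hrec k) ih

end Domination

theorem stmt_15_general (η ε : ℝ) (hη : 0 < η ∧ η < 1) (hε : 0 < ε)
    (σsq : ℕ → ℝ)
    (e μ : ℕ → ℝ)
    (he : ∀ k, e k = max (σsq k) ((η + ε) ^ k))
    (hμ : ∀ k, μ k = ∑ j ∈ Finset.Icc 1 k, η ^ (k - j) * σsq j)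
    (K : ℕ) (hK : ∀ k, K ≤ k → η + ε / 2 ≤ e (k + 1) / e k) :
    ∃ B : ℝ, 0 < B ∧ ∀ k, 1 ≤ k → μ k ≤ B * e k := by
  have hepos : ∀ k, 0 < e k := fun k => by
    rw [he k]
    exact lt_max_of_lt_right (pow_pos (by linarith : (0 : ℝ) < η + ε) k)
  have hrec : ∀ k, μ (k + 1) ≤ η * μ k + e (k + 1) := fun k => by
    rw [hμ, hμ, sum_Icc_pow_sub_mul_succ, he]
    gcongr
    exact le_max_left _ _
  have hgrow : ∀ k, K ≤ k → (η + ε / 2) * e k ≤ e (k + 1) := fun k hk =>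
    (le_div_iff₀ (hepos k)).mp (hK k hk)
  obtain ⟨B, hB, hμB⟩ :=
    exists_forall_le_mul_of_eventually_growth hη.1.le (by linarith) hepos hrec hgrow
  exact ⟨B, hB, fun k _ => hμB k⟩

theorem stmt_15 (η ε : ℝ) (hη : 0 < η ∧ η < 1) (hε : 0 < ε)
    (σsq : ℕ → ℝ) (hσ : ∀ k, 0 ≤ σsq k)
    (e μ : ℕ → ℝ)
    (he : ∀ k, e k = max (σsq k) ((η + ε) ^ k))
    (hμ : ∀ k, μ k = ∑ j ∈ Finset.Icc 1 k, η ^ (k - j) * σsq j)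
    (K : ℕ) (hK : ∀ k, K ≤ k → η + ε / 2 ≤ e (k + 1) / e k) :
    ∃ B : ℝ, 0 < B ∧ ∀ k, 1 ≤ k → μ k ≤ B * e k :=
  stmt_15_general η ε hη hε σsq e μ he hμ K hK
end

section
/- Let F : ℝⁿ → ℝ be differentiable with L-Lipschitz gradient and let r : ℝⁿ → ℝ be convex. For any x, g ∈ ℝⁿ and 0 < α < 1/L, let x⁺ = prox_{αr}(x − αg) and δ = g − ∇F(x). Then F(x⁺) + r(x⁺) − F(x) − r(x) ≤ −⟨δ, x⁺ − x⟩ − (1/α − L/2)‖x⁺ − x‖² ≤ (α/(1 − Lα))‖δ‖² − (1/2)(1/(2α) − L/2)‖x⁺ − x‖². -/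
/-!
The descent lemma for the `L`-smooth part gives
`F x⁺ ≤ F x + ⟪∇F x, x⁺ - x⟫ + L/2 ‖x⁺ - x‖²`. The prox objective
`r + ‖· - v‖² / (2α)` is `1/α`-strongly convex, so comparing its minimiser `x⁺` with `x`
yields the three-point inequality `r x⁺ + ⟪g, x⁺ - x⟫ + ‖x⁺ - x‖² / α ≤ r x`, twice the gain
of the plain prox inequality.
Adding the two and writing `g = ∇F x + δ` gives the first bound; Young's inequality with weight
`α / (1 - Lα)` on `-⟪δ, x⁺ - x⟫` gives the second.
-/

open Set Filter Topology
open scoped RealInnerProductSpace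

variable {E : Type*} [NormedAddCommGroup E] [InnerProductSpace ℝ E]

theorem ConvexOn.strongConvexOn_add_mul_sq_norm_sub {s : Set E} {r : E → ℝ}
    (hr : ConvexOn ℝ s r) (c : ℝ) (v : E) :
    StrongConvexOn s (2 * c) fun u ↦ r u + c * ‖u - v‖ ^ 2 := by
  rw [strongConvexOn_iff_convex]
  have hlin : ConvexOn ℝ s fun u ↦ -(2 * c) * ⟪v, u⟫ :=
    ((-(2 * c)) • innerSL ℝ v).toLinearMap.convexOn hr.1
  refine ((hr.add hlin).add_const (c * ‖v‖ ^ 2)).congr fun u _ ↦ ?_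
  simp only [Pi.add_apply]
  rw [norm_sub_sq_real, real_inner_comm]
  ring

theorem StrongConvexOn.add_mul_sq_norm_sub_le_of_isMinOn {s : Set E} {f : E → ℝ} {m : ℝ}
    {p u : E} (hf : StrongConvexOn s m f) (hp : IsMinOn f s p) (hps : p ∈ s) (hu : u ∈ s) :
    f p + m / 2 * ‖u - p‖ ^ 2 ≤ f u := by
  have hseg : ∀ t ∈ Ioo (0 : ℝ) 1, m / 2 * ‖u - p‖ ^ 2 * (1 - t) ≤ f u - f p := by
    rintro t ⟨ht0, ht1⟩
    have hmin : f p ≤ f ((1 - t) • p + t • u) :=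
      hp (hf.1 hps hu (sub_nonneg.2 ht1.le) ht0.le (sub_add_cancel 1 t))
    have hconv := hf.2 hps hu (sub_nonneg.2 ht1.le) ht0.le (sub_add_cancel 1 t)
    rw [norm_sub_rev, smul_eq_mul, smul_eq_mul] at hconv
    refine le_of_mul_le_mul_left ?_ ht0
    linarith
  have hlim : Tendsto (fun t : ℝ ↦ m / 2 * ‖u - p‖ ^ 2 * (1 - t)) (𝓝[>] 0)
      (𝓝 (m / 2 * ‖u - p‖ ^ 2)) := by
    have : Continuous fun t : ℝ ↦ m / 2 * ‖u - p‖ ^ 2 * (1 - t) := by fun_prop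
    simpa using this.continuousWithinAt (s := Ioi 0) (x := 0) |>.tendsto
  have := le_of_tendsto hlim (by filter_upwards [Ioo_mem_nhdsGT one_pos] using hseg)
  linarith

theorem le_add_inner_add_mul_sq_norm_of_lipschitz_gradient [CompleteSpace E] {f : E → ℝ}
    {f' : E → E} {L : ℝ} (hf : ∀ x, HasGradientAt f (f' x) x)
    (hlip : ∀ x y, ‖f' x - f' y‖ ≤ L * ‖x - y‖) (a b : E) :
    f b ≤ f a + ⟪f' a, b - a⟫ + L / 2 * ‖b - a‖ ^ 2 := by
  set d := b - a
  have hline : ∀ t : ℝ, HasDerivAt (fun t : ℝ ↦ f (a + t • d) - t * ⟪f' a, d⟫)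
      (⟪f' (a + t • d), d⟫ - ⟪f' a, d⟫) t := by
    intro t
    have hpath : HasDerivAt (fun t : ℝ ↦ a + t • d) d t := by
      simpa using ((hasDerivAt_id t).smul_const d).const_add a
    exact ((hf _).hasFDerivAt.comp_hasDerivAt t hpath).sub (hasDerivAt_mul_const _)
  have hbound : ∀ t : ℝ, HasDerivAt (fun t : ℝ ↦ f a + L / 2 * t ^ 2 * ‖d‖ ^ 2)
      (L * t * ‖d‖ ^ 2) t := by
    intro t
    exact ((((hasDerivAt_pow 2 t).const_mul (L / 2)).mul_const (‖d‖ ^ 2)).const_add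
      (f a)).congr_deriv (by ring)
  have hslope :
      ∀ t ∈ Ico (0 : ℝ) 1, ⟪f' (a + t • d), d⟫ - ⟪f' a, d⟫ ≤ L * t * ‖d‖ ^ 2 := by
    rintro t ⟨ht0, -⟩
    calc ⟪f' (a + t • d), d⟫ - ⟪f' a, d⟫ = ⟪f' (a + t • d) - f' a, d⟫ :=
          (inner_sub_left ..).symm
      _ ≤ ‖f' (a + t • d) - f' a‖ * ‖d‖ := real_inner_le_norm _ _
      _ ≤ L * ‖(a + t • d) - a‖ * ‖d‖ := by gcongr; exact hlip _ _
      _ = L * t * ‖d‖ ^ 2 := by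
        rw [add_sub_cancel_left, norm_smul, Real.norm_of_nonneg ht0]; ring
  have key := image_le_of_deriv_right_le_deriv_boundary
    (fun t _ ↦ (hline t).continuousAt.continuousWithinAt)
    (fun t _ ↦ (hline t).hasDerivWithinAt) (by simp)
    (fun t _ ↦ (hbound t).continuousAt.continuousWithinAt)
    (fun t _ ↦ (hbound t).hasDerivWithinAt) hslope (right_mem_Icc.2 zero_le_one)
  simp only [one_smul, one_mul, one_pow, d, add_sub_cancel] at key
  linarith

theorem ConvexOn.add_inner_add_sq_norm_le_of_prox {r : E → ℝ} (hr : ConvexOn ℝ univ r)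
    {α : ℝ} (hα : α ≠ 0) {x g p : E}
    (hp : ∀ u, r p + 1 / (2 * α) * ‖p - (x - α • g)‖ ^ 2 ≤
      r u + 1 / (2 * α) * ‖u - (x - α • g)‖ ^ 2) :
    r p + ⟪g, p - x⟫ + 1 / α * ‖p - x‖ ^ 2 ≤ r x := by
  have h := (hr.strongConvexOn_add_mul_sq_norm_sub (1 / (2 * α)) (x - α • g))
    |>.add_mul_sq_norm_sub_le_of_isMinOn (fun u _ ↦ hp u) (mem_univ p) (mem_univ x)
  have hp_sub :
      ‖p - (x - α • g)‖ ^ 2 = ‖p - x‖ ^ 2 + 2 * α * ⟪g, p - x⟫ + α ^ 2 * ‖g‖ ^ 2 := by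
    rw [sub_sub_eq_add_sub, add_sub_right_comm, norm_add_sq_real, norm_smul,
      real_inner_smul_right, real_inner_comm, Real.norm_eq_abs, mul_pow, sq_abs]
    ring
  have hx_sub : ‖x - (x - α • g)‖ ^ 2 = α ^ 2 * ‖g‖ ^ 2 := by
    rw [sub_sub_cancel, norm_smul, Real.norm_eq_abs, mul_pow, sq_abs]
  rw [hp_sub, hx_sub, norm_sub_rev x p] at h
  have hα' : 1 / (2 * α) * (2 * α) = 1 := by field_simp
  linear_combination h - ⟪g, p - x⟫ * hα'

theorem real_inner_le_mul_sq_norm_add_sq_norm_div {ε : ℝ} (hε : 0 < ε) (u w : E) :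
    ⟪u, w⟫ ≤ ε * ‖u‖ ^ 2 + ‖w‖ ^ 2 / (4 * ε) := by
  linear_combination real_inner_le_norm u w +
    1 / 2 * two_mul_le_add_mul_sq (a := ‖u‖) (b := ‖w‖) (by positivity : 0 < 2 * ε)

theorem stmt_17_general (n : ℕ) (F : EuclideanSpace ℝ (Fin n) → ℝ)
    (G : EuclideanSpace ℝ (Fin n) → EuclideanSpace ℝ (Fin n))
    (hG : ∀ x, HasGradientAt F (G x) x)
    (L : ℝ)
    (hlip : ∀ x y, ‖G x - G y‖ ≤ L * ‖x - y‖)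
    (r : EuclideanSpace ℝ (Fin n) → ℝ) (hconv : ConvexOn ℝ Set.univ r)
    (α : ℝ) (hα : 0 < α) (hαL : α < 1 / L)
    (x g xp δ : EuclideanSpace ℝ (Fin n))
    (hxp : ∀ u, r xp + (1 / (2 * α)) * ‖xp - (x - α • g)‖ ^ 2 ≤
      r u + (1 / (2 * α)) * ‖u - (x - α • g)‖ ^ 2)
    (hδ : δ = g - G x) :
    F xp + r xp - F x - r x ≤
        -(inner ℝ δ (xp - x) : ℝ) - (1 / α - L / 2) * ‖xp - x‖ ^ 2 ∧
    -(inner ℝ δ (xp - x) : ℝ) - (1 / α - L / 2) * ‖xp - x‖ ^ 2 ≤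
        (α / (1 - L * α)) * ‖δ‖ ^ 2 - (1 / 2) * (1 / (2 * α) - L / 2) * ‖xp - x‖ ^ 2 := by
  have hLα : 0 < 1 - L * α := by
    rcases le_or_gt L 0 with hL | hL
    · nlinarith
    · rw [lt_div_iff₀ hL] at hαL; linarith
  have hprox := hconv.add_inner_add_sq_norm_le_of_prox hα.ne' hxp
  have hdesc := le_add_inner_add_mul_sq_norm_of_lipschitz_gradient hG hlip x xp
  have hδ_inner : ⟪δ, xp - x⟫ = ⟪g, xp - x⟫ - ⟪G x, xp - x⟫ := by rw [hδ, inner_sub_left]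
  refine ⟨by linarith, ?_⟩
  have hyoung := real_inner_le_mul_sq_norm_add_sq_norm_div (div_pos hα hLα) (-δ) (xp - x)
  rw [inner_neg_left, norm_neg] at hyoung
  have hcoef : ‖xp - x‖ ^ 2 / (4 * (α / (1 - L * α))) ≤
      (1 / α - L / 2 - 1 / 2 * (1 / (2 * α) - L / 2)) * ‖xp - x‖ ^ 2 := by
    field_simp
    nlinarith [sq_nonneg ‖xp - x‖]
  linarith

theorem stmt_17 (n : ℕ) (F : EuclideanSpace ℝ (Fin n) → ℝ)
    (G : EuclideanSpace ℝ (Fin n) → EuclideanSpace ℝ (Fin n))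
    (hG : ∀ x, HasGradientAt F (G x) x)
    (L : ℝ) (hL : 0 < L)
    (hlip : ∀ x y, ‖G x - G y‖ ≤ L * ‖x - y‖)
    (r : EuclideanSpace ℝ (Fin n) → ℝ) (hconv : ConvexOn ℝ Set.univ r)
    (α : ℝ) (hα : 0 < α) (hαL : α < 1 / L)
    (x g xp δ : EuclideanSpace ℝ (Fin n))
    (hxp : ∀ u, r xp + (1 / (2 * α)) * ‖xp - (x - α • g)‖ ^ 2 ≤
      r u + (1 / (2 * α)) * ‖u - (x - α • g)‖ ^ 2)
    (hδ : δ = g - G x) :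
    F xp + r xp - F x - r x ≤
        -(inner ℝ δ (xp - x) : ℝ) - (1 / α - L / 2) * ‖xp - x‖ ^ 2 ∧
    -(inner ℝ δ (xp - x) : ℝ) - (1 / α - L / 2) * ‖xp - x‖ ^ 2 ≤
        (α / (1 - L * α)) * ‖δ‖ ^ 2 - (1 / 2) * (1 / (2 * α) - L / 2) * ‖xp - x‖ ^ 2 :=
  stmt_17_general n F G hG L hlip r hconv α hα hαL x g xp δ hxp hδ
end
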